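/- arXiv:2408.02174 — 6 statements merged into one kernel-verified Lean document; each statement's English description precedes it below -/
import Mathlib

section
/- Assume γ₁/γ₂ ≤ α and set l = √γ₁ + √(((1−α)/α)·(γ₂ − γ₁)). Then the following are equivalent: (a) every P ∈ D satisfies P({t ∈ ℝ : t·y ≤ b}) ≥ 1 − α; (b) μ·y + l·√(Σ·y²) ≤ b. (This is the first case of the paper's Theorem 1: the distributionally robust decision-dependent chance constraint is equivalent to a second-order cone constraint.) -/
/-!
Write `σ² = v` for the scale. If the mean deviation is at most `√γ₁ σ` and the second moment
about `m` at most `γ₂ σ²`, Markov's inequality for `(t - m + λ)²` with the optimal shift `λ`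
gives `P(t > c) ≤ α` whenever `c ≥ m + l σ`. Conversely, for `c < m + l σ`, a two-point law
with mass `p` slightly above `α` at `m + (√γ₁ + d_p) σ`, where `d_p = √((1 - p)/p (γ₂ - γ₁))`,
and the remaining mass placed so that the mean is `m + √γ₁ σ`, saturates both moment
constraints and has `P(t ≤ c) ≤ 1 - p < 1 - α`. The constraint `t y ≤ b` reduces to this
scalar case by pushing measures forward along `t ↦ t y`.
-/

open MeasureTheory Real Set Topology

def momentAmbiguitySet (γ₁ γ₂ m v : ℝ) : Set (Measure ℝ) :=
  {P | IsProbabilityMeasure P ∧ MemLp (id : ℝ → ℝ) 2 P ∧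
    ((∫ t, t ∂P) - m) ^ 2 ≤ γ₁ * v ∧ (∫ t, (t - m) ^ 2 ∂P) ≤ γ₂ * v}

noncomputable def twoPointMeasure (p x u : ℝ) : Measure ℝ :=
  ENNReal.ofReal (1 - p) • Measure.dirac x + ENNReal.ofReal p • Measure.dirac u

section momentAmbiguitySet

variable {γ₁ γ₂ m v : ℝ}

lemma dirac_mem_momentAmbiguitySet (hγ₁ : 0 ≤ γ₁) (hγ₂ : 0 ≤ γ₂) (hv : 0 ≤ v) :
    Measure.dirac m ∈ momentAmbiguitySet γ₁ γ₂ m v := by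
  refine ⟨inferInstance, ?_, ?_, ?_⟩
  · rw [memLp_two_iff_integrable_sq measurable_id.aestronglyMeasurable]
    exact integrable_dirac enorm_lt_top
  · simpa using mul_nonneg hγ₁ hv
  · simpa using mul_nonneg hγ₂ hv

lemma map_mul_mem_momentAmbiguitySet {P : Measure ℝ} (hP : P ∈ momentAmbiguitySet γ₁ γ₂ m v)
    (a : ℝ) : P.map (· * a) ∈ momentAmbiguitySet γ₁ γ₂ (m * a) (v * a ^ 2) := by
  obtain ⟨hprob, hL2, hmean, hvar⟩ := hP
  have hmap : AEMeasurable (· * a) P := (measurable_mul_const a).aemeasurable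
  refine ⟨Measure.isProbabilityMeasure_map hmap, ?_, ?_, ?_⟩
  · rw [memLp_map_measure_iff aestronglyMeasurable_id hmap]
    exact hL2.mul_const a
  · rw [integral_map (f := fun t ↦ t) hmap (by fun_prop), integral_mul_const, ← sub_mul, mul_pow,
      ← mul_assoc]
    exact mul_le_mul_of_nonneg_right hmean (sq_nonneg a)
  · rw [integral_map hmap (by fun_prop)]
    simp only [← sub_mul, mul_pow, integral_mul_const, ← mul_assoc]
    exact mul_le_mul_of_nonneg_right hvar (sq_nonneg a)

lemma forall_momentAmbiguitySet_map_mul_iff {a : ℝ} (ha : a ≠ 0) (p : Measure ℝ → Prop) :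
    (∀ P ∈ momentAmbiguitySet γ₁ γ₂ m v, p (P.map (· * a))) ↔
      ∀ Q ∈ momentAmbiguitySet γ₁ γ₂ (m * a) (v * a ^ 2), p Q := by
  refine ⟨fun h Q hQ ↦ ?_, fun h P hP ↦ h _ (map_mul_mem_momentAmbiguitySet hP a)⟩
  have hQ' := map_mul_mem_momentAmbiguitySet hQ a⁻¹
  rw [mul_inv_cancel_right₀ ha, inv_pow, mul_inv_cancel_right₀ (pow_ne_zero 2 ha)] at hQ'
  convert h _ hQ'
  rw [Measure.map_map (measurable_mul_const a) (measurable_mul_const a⁻¹)]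
  simp [Function.comp_def, inv_mul_cancel_right₀ ha]

end momentAmbiguitySet

section Cantelli

variable {P : Measure ℝ} [IsProbabilityMeasure P]

lemma integral_sub_add_sq (hP : MemLp (id : ℝ → ℝ) 2 P) (m lam : ℝ) :
    ∫ t, (t - m + lam) ^ 2 ∂P =
      (∫ t, (t - m) ^ 2 ∂P) + 2 * lam * ((∫ t, t ∂P) - m) + lam ^ 2 := by
  have hint : Integrable (fun t : ℝ ↦ t) P := hP.integrable one_le_two
  have hsq : Integrable (fun t ↦ (t - m) ^ 2) P := (hP.sub (memLp_const m)).integrable_sq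
  have hlin : Integrable (fun t ↦ 2 * lam * (t - m)) P :=
    (hint.sub (integrable_const m)).const_mul _
  have hexp : (fun t ↦ (t - m + lam) ^ 2) = fun t ↦ (t - m) ^ 2 + 2 * lam * (t - m) + lam ^ 2 := by
    ext t; ring
  rw [hexp, integral_add (f := fun t ↦ (t - m) ^ 2 + 2 * lam * (t - m)) (hsq.add hlin)
    (integrable_const _), integral_add hsq hlin, integral_const_mul,
    integral_sub hint (integrable_const m)]
  simp

lemma mul_measureReal_Ioi_le (hP : MemLp (id : ℝ → ℝ) 2 P) {c m lam : ℝ}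
    (h : 0 ≤ c - m + lam) :
    (c - m + lam) ^ 2 * P.real (Ioi c) ≤ ∫ t, (t - m + lam) ^ 2 ∂P := by
  have hint : Integrable (fun t ↦ (t - m + lam) ^ 2) P :=
    (hP.sub (memLp_const (m - lam))).integrable_sq.congr (by filter_upwards with t; simp; ring)
  refine le_trans ?_ (mul_meas_ge_le_integral_of_nonneg (ae_of_all _ fun t ↦ sq_nonneg _) hint
    ((c - m + lam) ^ 2))
  gcongr
  · exact measure_ne_top _ _
  · intro t (ht : c < t)
    exact pow_le_pow_left₀ h (by linarith) 2

end Cantelli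

section twoPointMeasure

variable {p x u : ℝ}

lemma isProbabilityMeasure_twoPointMeasure (hp0 : 0 ≤ p) (hp1 : p ≤ 1) :
    IsProbabilityMeasure (twoPointMeasure p x u) := by
  constructor
  simp [twoPointMeasure, ← ENNReal.ofReal_add (sub_nonneg.2 hp1) hp0]

lemma integrable_twoPointMeasure (f : ℝ → ℝ) : Integrable f (twoPointMeasure p x u) :=
  ((integrable_dirac enorm_lt_top).smul_measure ENNReal.ofReal_ne_top).add_measure
    ((integrable_dirac enorm_lt_top).smul_measure ENNReal.ofReal_ne_top)

lemma integral_twoPointMeasure (hp0 : 0 ≤ p) (hp1 : p ≤ 1) (f : ℝ → ℝ) :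
    ∫ t, f t ∂twoPointMeasure p x u = (1 - p) * f x + p * f u := by
  have hint (a y : ℝ) : Integrable f (ENNReal.ofReal a • Measure.dirac y) :=
    (integrable_dirac enorm_lt_top).smul_measure ENNReal.ofReal_ne_top
  rw [twoPointMeasure, integral_add_measure (hint _ _) (hint _ _), integral_smul_measure,
    integral_smul_measure, integral_dirac, integral_dirac, ENNReal.toReal_ofReal (by linarith),
    ENNReal.toReal_ofReal hp0, smul_eq_mul, smul_eq_mul]

lemma measureReal_twoPointMeasure_Iic_le (hp1 : p ≤ 1) {c : ℝ} (hc : c < u) :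
    (twoPointMeasure p x u).real (Iic c) ≤ 1 - p := by
  refine ENNReal.toReal_le_of_le_ofReal (sub_nonneg.2 hp1) ?_
  have hu : Measure.dirac u (Iic c) = 0 := by
    simp [Measure.dirac_apply' _ measurableSet_Iic, hc]
  rw [twoPointMeasure, Measure.add_apply, Measure.smul_apply, Measure.smul_apply, hu, smul_zero,
    add_zero, smul_eq_mul]
  exact mul_le_of_le_one_right' prob_le_one

lemma twoPointMeasure_mem_momentAmbiguitySet {γ₁ γ₂ m g e : ℝ} (hp0 : 0 < p) (hp1 : p < 1)
    (hg : g ^ 2 = γ₁) (he : p * e ^ 2 = (1 - p) * (γ₂ - γ₁)) (s : ℝ) :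
    twoPointMeasure p (m + (g - p * e / (1 - p)) * s) (m + (g + e) * s) ∈
      momentAmbiguitySet γ₁ γ₂ m (s ^ 2) := by
  have h1p : 1 - p ≠ 0 := by linarith
  refine ⟨isProbabilityMeasure_twoPointMeasure hp0.le hp1.le, ?_, ?_, ?_⟩
  · rw [memLp_two_iff_integrable_sq measurable_id.aestronglyMeasurable]
    exact integrable_twoPointMeasure _
  · rw [integral_twoPointMeasure hp0.le hp1.le (fun t ↦ t), ← hg]
    have hmean : (1 - p) * (m + (g - p * e / (1 - p)) * s) + p * (m + (g + e) * s) - m = g * s := by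
      field_simp; ring
    rw [hmean, mul_pow]
  · rw [integral_twoPointMeasure hp0.le hp1.le (fun t ↦ (t - m) ^ 2)]
    have hvar : (1 - p) * (m + (g - p * e / (1 - p)) * s - m) ^ 2 + p * (m + (g + e) * s - m) ^ 2 =
        γ₂ * s ^ 2 := by
      field_simp
      linear_combination (s ^ 2) * he + ((1 - p) * s ^ 2) * hg
    rw [hvar]

end twoPointMeasure

section WorstCase

variable {α γ₁ γ₂ m v c : ℝ}

lemma measureReal_Ioi_le_of_mem_momentAmbiguitySet (hα0 : 0 < α) (hα1 : α < 1) (hγ₁ : 0 < γ₁)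
    (hγ : γ₁ ≤ α * γ₂) (hv : 0 < v) {Q : Measure ℝ} (hQ : Q ∈ momentAmbiguitySet γ₁ γ₂ m v)
    (hc : m + (√γ₁ + √((1 - α) / α * (γ₂ - γ₁))) * √v ≤ c) :
    Q.real (Ioi c) ≤ α := by
  obtain ⟨hprob, hL2, hmean, hvar⟩ := hQ
  have h1α : 0 < 1 - α := by linarith
  set g := √γ₁
  set d := √((1 - α) / α * (γ₂ - γ₁))
  set s := √v
  have hs : 0 < s := sqrt_pos.2 hv
  have hg2 : g ^ 2 = γ₁ := sq_sqrt hγ₁.le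
  have hs2 : s ^ 2 = v := sq_sqrt hv.le
  have hd2 : α * d ^ 2 = (1 - α) * (γ₂ - γ₁) := by
    rw [sq_sqrt (by have : γ₁ ≤ γ₂ := by nlinarith
                    positivity)]
    field_simp
  have hd : 0 < d := by
    refine sqrt_pos.2 (mul_pos (div_pos h1α hα0) ?_)
    nlinarith
  -- `lam` minimises the Markov bound `∫ (t - m + lam)² ∂Q / (c - m + lam)²` at
  -- `c = m + (g + d) * s`, where the bound equals `α`
  set lam := (α * d / (1 - α) - g) * s with hlam_def
  set A := d / (1 - α) * s with hA_def
  have hlam : 0 ≤ lam := by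
    have hgd : (1 - α) * g ≤ α * d := by
      refine le_of_sq_le_sq ?_ (by positivity)
      rw [mul_pow, mul_pow, hg2, sq α, mul_assoc, hd2]
      nlinarith [mul_le_mul_of_nonneg_left hγ h1α.le]
    have : 0 ≤ α * d / (1 - α) - g := by rw [sub_nonneg, le_div_iff₀ h1α]; linarith
    exact mul_nonneg this hs.le
  have hA : A ≤ c - m + lam := by
    have : A = (g + d) * s + lam := by rw [hA_def, hlam_def]; field_simp; ring
    linarith
  have hmean' : (∫ t, t ∂Q) - m ≤ g * s :=
    le_of_sq_le_sq (by rwa [mul_pow, hg2, hs2]) (by positivity)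
  have hbound : ∫ t, (t - m + lam) ^ 2 ∂Q ≤ α * A ^ 2 := by
    rw [integral_sub_add_sq hL2]
    calc _ ≤ γ₂ * v + 2 * lam * (g * s) + lam ^ 2 := by gcongr
      _ = α * A ^ 2 := by
        rw [hA_def, hlam_def]
        field_simp
        linear_combination (-(1 - α) * s ^ 2) * hd2 + (-(1 - α) ^ 2 * γ₂) * hs2 +
          (-(1 - α) ^ 2 * s ^ 2) * hg2
  have hA0 : 0 < A := by positivity
  refine le_of_mul_le_mul_left ?_ (pow_pos hA0 2)
  calc A ^ 2 * Q.real (Ioi c) ≤ (c - m + lam) ^ 2 * Q.real (Ioi c) := by gcongr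
    _ ≤ ∫ t, (t - m + lam) ^ 2 ∂Q := mul_measureReal_Ioi_le hL2 (hA0.le.trans hA)
    _ ≤ A ^ 2 * α := by linarith

lemma exists_mem_momentAmbiguitySet_measureReal_Iic_lt (hα0 : 0 < α) (hα1 : α < 1)
    (hγ₁ : 0 ≤ γ₁) (hγ : γ₁ ≤ γ₂) (hv : 0 ≤ v)
    (hc : c < m + (√γ₁ + √((1 - α) / α * (γ₂ - γ₁))) * √v) :
    ∃ Q ∈ momentAmbiguitySet γ₁ γ₂ m v, Q.real (Iic c) < 1 - α := by
  have hcont : ContinuousAt (fun p ↦ m + (√γ₁ + √((1 - p) / p * (γ₂ - γ₁))) * √v) α := by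
    fun_prop (disch := exact hα0.ne')
  obtain ⟨p, ⟨hpc, hp1⟩, hαp⟩ :=
    (((hcont.eventually (lt_mem_nhds hc)).and (gt_mem_nhds hα1)).filter_mono
      nhdsWithin_le_nhds |>.and self_mem_nhdsWithin).exists (f := 𝓝[>] α)
  have hp0 : 0 < p := hα0.trans hαp
  set e := √((1 - p) / p * (γ₂ - γ₁))
  have he : p * e ^ 2 = (1 - p) * (γ₂ - γ₁) := by
    rw [sq_sqrt (mul_nonneg (div_nonneg (by linarith) hp0.le) (by linarith))]
    field_simp
  have hQ := twoPointMeasure_mem_momentAmbiguitySet (m := m) hp0 hp1 (sq_sqrt hγ₁) he √v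
  rw [sq_sqrt hv] at hQ
  exact ⟨_, hQ, (measureReal_twoPointMeasure_Iic_le hp1.le hpc).trans_lt (by linarith)⟩

theorem forall_momentAmbiguitySet_le_measureReal_Iic_iff (hα0 : 0 < α) (hα1 : α < 1)
    (hγ₁ : 0 < γ₁) (hγ : γ₁ ≤ α * γ₂) (hv : 0 < v) :
    (∀ Q ∈ momentAmbiguitySet γ₁ γ₂ m v, 1 - α ≤ Q.real (Iic c)) ↔
      m + (√γ₁ + √((1 - α) / α * (γ₂ - γ₁))) * √v ≤ c := by
  refine ⟨fun h ↦ ?_, fun hc Q hQ ↦ ?_⟩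
  · by_contra! hc
    obtain ⟨Q, hQ, hlt⟩ := exists_mem_momentAmbiguitySet_measureReal_Iic_lt hα0 hα1 hγ₁.le
      (by nlinarith) hv.le hc
    linarith [h Q hQ]
  · have := hQ.1
    rw [← compl_Ioi, probReal_compl_eq_one_sub measurableSet_Ioi]
    linarith [measureReal_Ioi_le_of_mem_momentAmbiguitySet hα0 hα1 hγ₁ hγ hv hQ hc]

end WorstCase

/-- First case of the paper's Theorem 1: under `γ₁/γ₂ ≤ α`, the distributionally
robust chance constraint over the moment ambiguity set `D` is equivalent to a
second-order cone constraint. -/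
theorem stmt_0
    (α γ₁ γ₂ Sig μ b y : ℝ)
    (hα0 : 0 < α) (hα1 : α < 1) (hγ₁ : 0 < γ₁) (hγ₂ : 1 < γ₂) (hSig : 0 < Sig)
    (hcase : γ₁ / γ₂ ≤ α)
    (l : ℝ) (hl : l = Real.sqrt γ₁ + Real.sqrt (((1 - α) / α) * (γ₂ - γ₁)))
    (D : Set (Measure ℝ))
    (hD : D = {P : Measure ℝ | IsProbabilityMeasure P ∧ MemLp (id : ℝ → ℝ) 2 P ∧
      ((∫ t, t ∂P) - μ) ^ 2 ≤ γ₁ * Sig ∧ (∫ t, (t - μ) ^ 2 ∂P) ≤ γ₂ * Sig}) :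
    (∀ P ∈ D, 1 - α ≤ (P {t : ℝ | t * y ≤ b}).toReal) ↔
      μ * y + l * Real.sqrt (Sig * y ^ 2) ≤ b := by
  change D = momentAmbiguitySet γ₁ γ₂ μ Sig at hD
  subst hD hl
  rcases eq_or_ne y 0 with rfl | hy
  · simp only [mul_zero, zero_pow two_ne_zero, sqrt_zero, zero_add]
    refine ⟨fun h ↦ ?_, fun hb P hP ↦ ?_⟩
    · by_contra! hb
      have := h _ (dirac_mem_momentAmbiguitySet hγ₁.le (by linarith) hSig.le)
      simp only [not_le.2 hb, ofPred_false, measure_empty, ENNReal.toReal_zero] at this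
      linarith
    · have := hP.1
      simp only [hb, ofPred_true, measure_univ, ENNReal.toReal_one]
      linarith
  calc (∀ P ∈ momentAmbiguitySet γ₁ γ₂ μ Sig, 1 - α ≤ (P {t | t * y ≤ b}).toReal)
      ↔ ∀ P ∈ momentAmbiguitySet γ₁ γ₂ μ Sig, 1 - α ≤ (P.map (· * y)).real (Iic b) := by
        refine forall₂_congr fun P _ ↦ ?_
        rw [measureReal_def, Measure.map_apply (measurable_mul_const y) measurableSet_Iic]
        rfl
    _ ↔ ∀ Q ∈ momentAmbiguitySet γ₁ γ₂ (μ * y) (Sig * y ^ 2), 1 - α ≤ Q.real (Iic b) :=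
        forall_momentAmbiguitySet_map_mul_iff hy (fun Q ↦ 1 - α ≤ Q.real (Iic b))
    _ ↔ _ := forall_momentAmbiguitySet_le_measureReal_Iic_iff hα0 hα1 hγ₁
        (by rwa [div_le_iff₀ (by linarith)] at hcase) (by positivity)
end

section
/- If √γ₁·s < c ≤ (γ₂/√γ₁)·s, then the infimum of F(m, σ) over (m, σ) ∈ S equals (c − √γ₁·s)² / ((γ₂ − γ₁)·s² + (c − √γ₁·s)²), and this infimum is attained at (m, σ) = (√γ₁·s, √(γ₂ − γ₁)·s). -/
open Real

/-- Outer-level problem, first case: if `√γ₁·s < c ≤ (γ₂/√γ₁)·s`, the infimum of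
`F` over `S` equals `(c-√γ₁·s)²/((γ₂-γ₁)·s²+(c-√γ₁·s)²)`, attained at
`(√γ₁·s, √(γ₂-γ₁)·s)`. -/
theorem stmt_4
    (s γ₁ γ₂ c : ℝ) (hs : 0 < s) (hγ₁ : 0 < γ₁) (hγ : γ₁ ≤ γ₂)
    (hc1 : Real.sqrt γ₁ * s < c) (hc2 : c ≤ (γ₂ / Real.sqrt γ₁) * s)
    (S : Set (ℝ × ℝ)) (F : ℝ × ℝ → ℝ)
    (hS : S = {p : ℝ × ℝ | |p.1| ≤ Real.sqrt γ₁ * s ∧ p.1 ^ 2 + p.2 ^ 2 ≤ γ₂ * s ^ 2})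
    (hF : F = fun p : ℝ × ℝ => (c - p.1) ^ 2 / (p.2 ^ 2 + (c - p.1) ^ 2)) :
    sInf (F '' S)
        = (c - Real.sqrt γ₁ * s) ^ 2
            / ((γ₂ - γ₁) * s ^ 2 + (c - Real.sqrt γ₁ * s) ^ 2) ∧
    (Real.sqrt γ₁ * s, Real.sqrt (γ₂ - γ₁) * s) ∈ S ∧
    F (Real.sqrt γ₁ * s, Real.sqrt (γ₂ - γ₁) * s)
        = (c - Real.sqrt γ₁ * s) ^ 2
            / ((γ₂ - γ₁) * s ^ 2 + (c - Real.sqrt γ₁ * s) ^ 2) ∧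
    ∀ p ∈ S,
      (c - Real.sqrt γ₁ * s) ^ 2
          / ((γ₂ - γ₁) * s ^ 2 + (c - Real.sqrt γ₁ * s) ^ 2) ≤ F p := by
  set m₀ := Real.sqrt γ₁ * s with hm₀
  have hγ₁' : (0:ℝ) ≤ γ₁ := hγ₁.le
  have hsq1 : Real.sqrt γ₁ ^ 2 = γ₁ := Real.sq_sqrt hγ₁'
  have hsq2 : Real.sqrt (γ₂ - γ₁) ^ 2 = γ₂ - γ₁ := Real.sq_sqrt (by linarith)
  have hm₀pos : 0 < m₀ := mul_pos (Real.sqrt_pos.2 hγ₁) hs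
  have hm₀sq : m₀ ^ 2 = γ₁ * s ^ 2 := by rw [hm₀, mul_pow, hsq1]
  have hcm₀ : 0 < c - m₀ := by linarith
  have hD : (0:ℝ) ≤ (γ₂ - γ₁) * s ^ 2 := mul_nonneg (by linarith) (sq_nonneg s)
  have hden0 : 0 < (γ₂ - γ₁) * s ^ 2 + (c - m₀) ^ 2 := by nlinarith [sq_nonneg (c - m₀)]
  -- m₀ * c ≤ γ₂ * s ^ 2
  have hkey : m₀ * c ≤ γ₂ * s ^ 2 := by
    have h1 : Real.sqrt γ₁ * s * c ≤ Real.sqrt γ₁ * s * ((γ₂ / Real.sqrt γ₁) * s) :=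
      mul_le_mul_of_nonneg_left hc2 (le_of_lt hm₀pos)
    have hsγ : (0:ℝ) < Real.sqrt γ₁ := Real.sqrt_pos.2 hγ₁
    calc m₀ * c ≤ Real.sqrt γ₁ * s * ((γ₂ / Real.sqrt γ₁) * s) := h1
      _ = γ₂ * s ^ 2 := by field_simp
  -- membership
  have hmem : (m₀, Real.sqrt (γ₂ - γ₁) * s) ∈ S := by
    rw [hS]
    constructor
    · simp only [abs_of_pos hm₀pos]
      exact le_refl _
    · simp only [mul_pow, hsq2, hm₀sq]
      nlinarith
  -- value at point
  have hval : F (m₀, Real.sqrt (γ₂ - γ₁) * s)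
      = (c - m₀) ^ 2 / ((γ₂ - γ₁) * s ^ 2 + (c - m₀) ^ 2) := by
    rw [hF]
    simp only [mul_pow, hsq2]
  -- lower bound
  have hlb : ∀ p ∈ S, (c - m₀) ^ 2 / ((γ₂ - γ₁) * s ^ 2 + (c - m₀) ^ 2) ≤ F p := by
    rintro ⟨m, σ⟩ hp
    rw [hS] at hp
    obtain ⟨h1, h2⟩ := hp
    simp only [Set.mem_setOf_eq] at h1 h2 ⊢
    rw [hF]
    simp only
    have hm : m ≤ m₀ := le_trans (le_abs_self m) h1
    have hm' : -m₀ ≤ m := by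
      have := neg_abs_le m
      linarith [abs_nonneg m, h1, neg_le_neg h1]
    have hcm : 0 < c - m := by linarith
    have hden1 : 0 < σ ^ 2 + (c - m) ^ 2 := by positivity
    rw [div_le_div_iff₀ hden0 hden1]
    have hσ : σ ^ 2 ≤ γ₂ * s ^ 2 - m ^ 2 := by linarith
    -- suffices: (c-m₀)^2 * σ^2 ≤ (γ₂-γ₁)*s^2 * (c-m)^2
    have hmono : (c - m₀) ^ 2 * σ ^ 2 ≤ (γ₂ - γ₁) * s ^ 2 * (c - m) ^ 2 := by
      have h3 : (c - m₀) ^ 2 * σ ^ 2 ≤ (c - m₀) ^ 2 * (γ₂ * s ^ 2 - m ^ 2) :=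
        mul_le_mul_of_nonneg_left hσ (by positivity)
      have h4 : (c - m₀) ^ 2 * (γ₂ * s ^ 2 - m ^ 2)
          ≤ (γ₂ * s ^ 2 - m₀ ^ 2) * (c - m) ^ 2 := by
        nlinarith [mul_nonneg (sub_nonneg.2 hm) (sub_nonneg.2 hkey),
          mul_nonneg (mul_nonneg (sub_nonneg.2 hm) hcm₀.le) hcm.le,
          mul_nonneg (mul_nonneg (sub_nonneg.2 hm) (by linarith : (0:ℝ) ≤ m₀ + m)) hcm₀.le,
          mul_nonneg (sub_nonneg.2 hm) (mul_nonneg hcm₀.le (sub_nonneg.2 hkey)),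
          sq_nonneg (m₀ - m), sq_nonneg (c - m₀)]
      have h5 : γ₂ * s ^ 2 - m₀ ^ 2 = (γ₂ - γ₁) * s ^ 2 := by rw [hm₀sq]; ring
      calc (c - m₀) ^ 2 * σ ^ 2 ≤ (c - m₀) ^ 2 * (γ₂ * s ^ 2 - m ^ 2) := h3
        _ ≤ (γ₂ * s ^ 2 - m₀ ^ 2) * (c - m) ^ 2 := h4
        _ = (γ₂ - γ₁) * s ^ 2 * (c - m) ^ 2 := by rw [h5]
    nlinarith [sq_nonneg ((c-m₀)*(c-m))]
  refine ⟨?_, hmem, hval, hlb⟩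
  apply le_antisymm
  · exact csInf_le ⟨_, fun x ⟨p, hp, hpx⟩ => hpx ▸ hlb p hp⟩ ⟨_, hmem, hval⟩
  · exact le_csInf ⟨_, ⟨_, hmem, rfl⟩⟩ (fun x ⟨p, hp, hpx⟩ => hpx ▸ hlb p hp)
end

section
/- If c > (γ₂/√γ₁)·s, then the infimum of F(m, σ) over (m, σ) ∈ S equals (c² − γ₂·s²)/c², and this infimum is attained at the feasible point m = γ₂·s²/c, σ = √(γ₂·s² − (γ₂·s²/c)²). -/
open Real

/-- Outer-level problem, second case: if `c > (γ₂/√γ₁)·s`, the infimum of `F`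
over `S` equals `(c²-γ₂·s²)/c²`, attained at `(γ₂·s²/c, √(γ₂·s²-(γ₂·s²/c)²))`. -/
theorem stmt_5
    (s γ₁ γ₂ c : ℝ) (hs : 0 < s) (hγ₁ : 0 < γ₁) (hγ : γ₁ ≤ γ₂)
    (hc : (γ₂ / Real.sqrt γ₁) * s < c)
    (S : Set (ℝ × ℝ)) (F : ℝ × ℝ → ℝ)
    (hS : S = {p : ℝ × ℝ | |p.1| ≤ Real.sqrt γ₁ * s ∧ p.1 ^ 2 + p.2 ^ 2 ≤ γ₂ * s ^ 2})
    (hF : F = fun p : ℝ × ℝ => (c - p.1) ^ 2 / (p.2 ^ 2 + (c - p.1) ^ 2)) :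
    sInf (F '' S) = (c ^ 2 - γ₂ * s ^ 2) / c ^ 2 ∧
    (γ₂ * s ^ 2 / c, Real.sqrt (γ₂ * s ^ 2 - (γ₂ * s ^ 2 / c) ^ 2)) ∈ S ∧
    F (γ₂ * s ^ 2 / c, Real.sqrt (γ₂ * s ^ 2 - (γ₂ * s ^ 2 / c) ^ 2))
        = (c ^ 2 - γ₂ * s ^ 2) / c ^ 2 ∧
    ∀ p ∈ S, (c ^ 2 - γ₂ * s ^ 2) / c ^ 2 ≤ F p := by
  set t := Real.sqrt γ₁ with htdef
  have ht0 : 0 < t := Real.sqrt_pos.mpr hγ₁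
  have ht2 : t ^ 2 = γ₁ := Real.sq_sqrt hγ₁.le
  have hγ₂0 : 0 < γ₂ := lt_of_lt_of_le hγ₁ hγ
  have hct : γ₂ * s < c * t := by
    have h : γ₂ * s / t < c := by rwa [div_mul_eq_mul_div] at hc
    exact (div_lt_iff₀ ht0).mp h
  have hts : t * s < c := by nlinarith
  have hc0 : 0 < c := lt_trans (by positivity) hts
  set K := γ₂ * s ^ 2 with hKdef
  have hK0 : 0 < K := by positivity
  have hKc : K < c ^ 2 := by nlinarith [sq_nonneg (c * t - γ₂ * s)]
  -- lower bound
  have hlow : ∀ p ∈ S, (c ^ 2 - K) / c ^ 2 ≤ F p := by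
    intro p hp
    rw [hS] at hp
    obtain ⟨h1, h2⟩ := hp
    have hm : p.1 ≤ t * s := le_trans (le_abs_self _) h1
    have hcm : 0 < c - p.1 := by linarith
    have hden : 0 < p.2 ^ 2 + (c - p.1) ^ 2 := by positivity
    rw [hF]
    rw [div_le_div_iff₀ (by positivity) hden]
    nlinarith [sq_nonneg (c * p.1 - K), mul_nonneg (sub_nonneg.mpr hKc.le)
      (sub_nonneg.mpr h2), sq_nonneg p.2]
  -- feasibility
  have hm0 : 0 < K / c := by positivity
  have hmts : K / c ≤ t * s := by
    rw [div_le_iff₀ hc0]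
    nlinarith
  have hσnn : 0 ≤ K - (K / c) ^ 2 := by
    have h : (K / c) ^ 2 = K ^ 2 / c ^ 2 := by ring
    rw [h, sub_nonneg, div_le_iff₀ (by positivity)]
    nlinarith
  have hσsq : Real.sqrt (K - (K / c) ^ 2) ^ 2 = K - (K / c) ^ 2 :=
    Real.sq_sqrt hσnn
  have hmem : (K / c, Real.sqrt (K - (K / c) ^ 2)) ∈ S := by
    rw [hS]
    constructor
    · rw [abs_of_pos hm0]; exact hmts
    · simp only [hσsq]; linarith
  -- value
  have hval : F (K / c, Real.sqrt (K - (K / c) ^ 2)) = (c ^ 2 - K) / c ^ 2 := by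
    rw [hF]
    simp only [hσsq]
    have hden : K - (K / c) ^ 2 + (c - K / c) ^ 2 = c ^ 2 - K := by
      field_simp; ring
    rw [hden]
    rw [div_eq_div_iff (by linarith) (by positivity)]
    field_simp
  refine ⟨?_, hmem, hval, hlow⟩
  apply le_antisymm
  · exact csInf_le ⟨(c ^ 2 - K) / c ^ 2, fun x ⟨p, hp, hpx⟩ => hpx ▸ hlow p hp⟩
      ⟨_, hmem, hval⟩
  · exact le_csInf ⟨_, ⟨_, hmem, rfl⟩⟩ fun x ⟨p, hp, hpx⟩ => hpx ▸ hlow p hp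
end

section
/- Assume Y is nonempty, compact, and convex with 0 ∈ Y, and b > 0. Then the feasible-set map S is lower semicontinuous in the following sequential sense: for every sequence (xⱼ) in ℝᵐ converging to x and every y ∈ S(x), there exists a sequence (yⱼ) in ℝ with yⱼ ∈ S(xⱼ) for every j and yⱼ → y (Lemma 4(i), lower semicontinuity part). -/
open Real Filter

/-- Lemma 4(i), lower semicontinuity part: the feasible-set map `S` is
sequentially lower semicontinuous. -/
theorem stmt_7
    (m : ℕ) (hm : 1 ≤ m)
    (μ : (Fin m → ℝ) → ℝ) (hμ : Continuous μ)
    (l Sig b : ℝ) (hl : 0 ≤ l) (hSig : 0 ≤ Sig) (hb : 0 < b)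
    (Y : Set ℝ) (hYne : Y.Nonempty) (hYc : IsCompact Y) (hYconv : Convex ℝ Y)
    (hY0 : (0 : ℝ) ∈ Y)
    (S : (Fin m → ℝ) → Set ℝ)
    (hS : ∀ x, S x = {y ∈ Y | μ x * y + l * Real.sqrt Sig * |y| ≤ b})
    (x : ℕ → Fin m → ℝ) (xl : Fin m → ℝ)
    (hx : Tendsto x atTop (nhds xl))
    (y : ℝ) (hy : y ∈ S xl) :
    ∃ yseq : ℕ → ℝ, (∀ j, yseq j ∈ S (x j)) ∧ Tendsto yseq atTop (nhds y) := by
  rw [hS] at hy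
  obtain ⟨hyY, hyc⟩ := hy
  set c : (Fin m → ℝ) → ℝ := fun x' => μ x' * y + l * Real.sqrt Sig * |y| with hc
  have hcont : Continuous c := by
    exact (hμ.mul continuous_const).add continuous_const
  refine ⟨fun j => (b / max (c (x j)) b) * y, ?_, ?_⟩
  · intro j
    set t := b / max (c (x j)) b with ht
    have hmax : b ≤ max (c (x j)) b := le_max_right _ _
    have hmaxpos : 0 < max (c (x j)) b := lt_of_lt_of_le hb hmax
    have ht0 : 0 ≤ t := div_nonneg hb.le hmaxpos.le
    have ht1 : t ≤ 1 := by rw [ht, div_le_one hmaxpos]; exact hmax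
    rw [hS]
    constructor
    · have := hYconv hY0 hyY (by linarith : (0:ℝ) ≤ 1 - t) ht0 (by ring)
      simpa using this
    · have h1 : μ (x j) * (t * y) + l * Real.sqrt Sig * |t * y| = t * c (x j) := by
        rw [abs_mul, abs_of_nonneg ht0, hc]; ring
      rw [h1]
      calc t * c (x j) ≤ t * max (c (x j)) b :=
            mul_le_mul_of_nonneg_left (le_max_left _ _) ht0
        _ = b := by rw [ht]; field_simp
  · have hmaxl : max (c xl) b = b := max_eq_right hyc
    have h1 : Tendsto (fun j => b / max (c (x j)) b) atTop (nhds 1) := by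
      have h2 : Tendsto (fun j => max (c (x j)) b) atTop (nhds b) := by
        have h3 := ((hcont.tendsto xl).comp hx).max
          (tendsto_const_nhds : Tendsto (fun _ : ℕ => b) atTop (nhds b))
        rwa [hmaxl] at h3
      have : Tendsto (fun j => b / max (c (x j)) b) atTop (nhds (b / b)) := (tendsto_const_nhds : Tendsto (fun _ : ℕ => b) atTop (nhds b)).div h2 hb.ne'
      simpa [div_self hb.ne'] using this
    simpa using h1.mul (tendsto_const_nhds : Tendsto (fun _ : ℕ => y) atTop (nhds y))
end

section
/- Assume Y is nonempty, compact, and convex with 0 ∈ Y, and b > 0. Let k ≥ 1 and let φ : ℝᵐ × ℝᵏ × ℝ → ℝ be continuous such that for every (x, w) ∈ ℝᵐ × ℝᵏ the function y ↦ φ(x, w, y) is convex on ℝ. Define the best-response set H(x, w) = {y ∈ S(x) : φ(x, w, y) ≤ φ(x, w, y′) for all y′ ∈ S(x)}. Then H is upper semicontinuous in the following sequential sense: for all sequences (xⱼ) → x in ℝᵐ, (wⱼ) → w in ℝᵏ, and (zⱼ) → z in ℝ with zⱼ ∈ H(xⱼ, wⱼ) for every j, one has z ∈ H(x, w) (Lemma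 5(iv), an instance of Berge's maximum theorem). -/
open Real Filter

/-- Lemma 5(iv): the best-response map `H` is sequentially upper semicontinuous. -/
theorem stmt_10
    (m k : ℕ) (hm : 1 ≤ m) (hk : 1 ≤ k)
    (μ : (Fin m → ℝ) → ℝ) (hμ : Continuous μ)
    (l Sig b : ℝ) (hl : 0 ≤ l) (hSig : 0 ≤ Sig) (hb : 0 < b)
    (Y : Set ℝ) (hYne : Y.Nonempty) (hYc : IsCompact Y) (hYconv : Convex ℝ Y)
    (hY0 : (0 : ℝ) ∈ Y)
    (S : (Fin m → ℝ) → Set ℝ)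
    (hS : ∀ x, S x = {y ∈ Y | μ x * y + l * Real.sqrt Sig * |y| ≤ b})
    (φ : (Fin m → ℝ) → (Fin k → ℝ) → ℝ → ℝ)
    (hφc : Continuous fun p : (Fin m → ℝ) × (Fin k → ℝ) × ℝ => φ p.1 p.2.1 p.2.2)
    (hφconv : ∀ x w, ConvexOn ℝ Set.univ (φ x w))
    (H : (Fin m → ℝ) → (Fin k → ℝ) → Set ℝ)
    (hH : ∀ x w, H x w = {y ∈ S x | ∀ y' ∈ S x, φ x w y ≤ φ x w y'})
    (x : ℕ → Fin m → ℝ) (xl : Fin m → ℝ) (hx : Tendsto x atTop (nhds xl))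
    (w : ℕ → Fin k → ℝ) (wl : Fin k → ℝ) (hw : Tendsto w atTop (nhds wl))
    (z : ℕ → ℝ) (zl : ℝ) (hz : Tendsto z atTop (nhds zl))
    (hzH : ∀ j, z j ∈ H (x j) (w j)) :
    zl ∈ H xl wl := by
  set c := l * Real.sqrt Sig with hc
  have hc0 : 0 ≤ c := mul_nonneg hl (Real.sqrt_nonneg _)
  have h1 : ∀ j, z j ∈ S (x j) ∧
      ∀ y' ∈ S (x j), φ (x j) (w j) (z j) ≤ φ (x j) (w j) y' := by
    intro j
    have := hzH j
    rw [hH] at this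
    exact this
  have h1' : ∀ j, z j ∈ Y ∧ μ (x j) * z j + c * |z j| ≤ b := by
    intro j
    have := (h1 j).1
    rw [hS] at this
    exact this
  have hzlY : zl ∈ Y :=
    hYc.isClosed.mem_of_tendsto hz (Eventually.of_forall fun j => (h1' j).1)
  have tμz : Tendsto (fun j => μ (x j) * z j + c * |z j|) atTop
      (nhds (μ xl * zl + c * |zl|)) := by
    exact (((hμ.tendsto xl).comp hx).mul hz).add
      (tendsto_const_nhds.mul ((continuous_abs.tendsto zl).comp hz))
  have hzlS : zl ∈ S xl := by
    rw [hS]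
    exact ⟨hzlY, le_of_tendsto tμz (Eventually.of_forall fun j => (h1' j).2)⟩
  rw [hH]
  refine ⟨hzlS, ?_⟩
  intro y' hy'
  rw [hS] at hy'
  obtain ⟨hy'Y, hy'b⟩ := hy'
  have φcont : Continuous fun u : ℝ => φ xl wl u := by
    have h : Continuous fun u : ℝ => ((xl, (wl, u)) : (Fin m → ℝ) × (Fin k → ℝ) × ℝ) :=
      continuous_const.prodMk (continuous_const.prodMk continuous_id)
    exact hφc.comp h
  have tφz : Tendsto (fun j => φ (x j) (w j) (z j)) atTop (nhds (φ xl wl zl)) := by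
    have h : Tendsto (fun j => ((x j, (w j, z j)) : (Fin m → ℝ) × (Fin k → ℝ) × ℝ))
        atTop (nhds (xl, (wl, zl))) := hx.prodMk_nhds (hw.prodMk_nhds hz)
    exact (hφc.tendsto _).comp h
  have key : ∀ t : ℝ, 0 < t → t < 1 → φ xl wl zl ≤ φ xl wl (t * y') := by
    intro t ht0 ht1
    have htY : t * y' ∈ Y := by
      have := hYconv hY0 hy'Y (by linarith : (0:ℝ) ≤ 1 - t) ht0.le (by ring)
      simpa using this
    have tgoal : Tendsto (fun j => μ (x j) * (t * y') + c * |t * y'|) atTop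
        (nhds (μ xl * (t * y') + c * |t * y'|)) :=
      (((hμ.tendsto xl).comp hx).mul tendsto_const_nhds).add tendsto_const_nhds
    have hlt : μ xl * (t * y') + c * |t * y'| < b := by
      have habs : |t * y'| = t * |y'| := by rw [abs_mul, abs_of_pos ht0]
      have heq : μ xl * (t * y') + c * |t * y'| = t * (μ xl * y' + c * |y'|) := by
        rw [habs]; ring
      rw [heq]
      calc t * (μ xl * y' + c * |y'|) ≤ t * b := mul_le_mul_of_nonneg_left hy'b ht0.le
        _ < b := by nlinarith
    have hev : ∀ᶠ j in atTop, t * y' ∈ S (x j) := by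
      filter_upwards [tgoal.eventually_lt_const hlt] with j hj
      rw [hS]
      exact ⟨htY, hj.le⟩
    have hφle : ∀ᶠ j in atTop, φ (x j) (w j) (z j) ≤ φ (x j) (w j) (t * y') :=
      hev.mono fun j hj => (h1 j).2 _ hj
    have tφt : Tendsto (fun j => φ (x j) (w j) (t * y')) atTop
        (nhds (φ xl wl (t * y'))) := by
      have h : Tendsto (fun j => ((x j, (w j, t * y')) : (Fin m → ℝ) × (Fin k → ℝ) × ℝ))
          atTop (nhds (xl, (wl, t * y'))) :=
        hx.prodMk_nhds (hw.prodMk_nhds tendsto_const_nhds)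
      exact (hφc.tendsto _).comp h
    exact le_of_tendsto_of_tendsto tφz tφt hφle
  have tcont : Tendsto (fun t : ℝ => φ xl wl (t * y')) (nhdsWithin 1 (Set.Iio 1))
      (nhds (φ xl wl y')) := by
    have h : Tendsto (fun t : ℝ => φ xl wl (t * y')) (nhds 1)
        (nhds (φ xl wl (1 * y'))) :=
      (φcont.comp (continuous_id.mul continuous_const)).tendsto 1
    rw [one_mul] at h
    exact h.mono_left nhdsWithin_le_nhds
  have hev1 : ∀ᶠ t in nhdsWithin (1:ℝ) (Set.Iio 1), φ xl wl zl ≤ φ xl wl (t * y') := by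
    have h0 : ∀ᶠ t in nhdsWithin (1:ℝ) (Set.Iio 1), (0:ℝ) < t :=
      eventually_nhdsWithin_of_eventually_nhds (eventually_gt_nhds one_pos)
    have h2 : ∀ᶠ t in nhdsWithin (1:ℝ) (Set.Iio 1), t < 1 :=
      eventually_mem_nhdsWithin
    filter_upwards [h0, h2] with t ht0 ht1
    exact key t ht0 ht1
  exact ge_of_tendsto tcont hev1
end

section
/- There exists x* ∈ X such that V(x) ≤ V(x*) for every x ∈ X, where V(x) = sup { f(x, y) : y ∈ Nash(x) }; that is, the leader's best-response set K = argmax_{x ∈ X} V(x) is nonempty (the paper's Lemma 6). -/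
open Real

/-- The paper's Lemma 6: the leader's best-response set is nonempty. -/
theorem stmt_13
    (m I : ℕ) (hm : 1 ≤ m) (hI : 1 ≤ I)
    (X : Set (Fin m → ℝ)) (hXne : X.Nonempty) (hXc : IsCompact X)
    (f : (Fin m → ℝ) → (Fin I → ℝ) → ℝ)
    (hf : Continuous fun p : (Fin m → ℝ) × (Fin I → ℝ) => f p.1 p.2)
    (Y : Fin I → Set ℝ)
    (hYne : ∀ i, (Y i).Nonempty) (hYc : ∀ i, IsCompact (Y i))
    (hYconv : ∀ i, Convex ℝ (Y i)) (hY0 : ∀ i, (0 : ℝ) ∈ Y i)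
    (b l Sig : Fin I → ℝ)
    (hb : ∀ i, 0 < b i) (hl : ∀ i, 0 ≤ l i) (hSig : ∀ i, 0 ≤ Sig i)
    (μ : Fin I → (Fin m → ℝ) → ℝ) (hμ : ∀ i, Continuous (μ i))
    (S : Fin I → (Fin m → ℝ) → Set ℝ)
    (hS : ∀ i x, S i x = {y ∈ Y i | μ i x * y + l i * Real.sqrt (Sig i) * |y| ≤ b i})
    (φ : Fin I → (Fin m → ℝ) → (Fin I → ℝ) → ℝ)
    (hφc : ∀ i, Continuous fun p : (Fin m → ℝ) × (Fin I → ℝ) => φ i p.1 p.2)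
    (hφconv : ∀ i x y, ConvexOn ℝ Set.univ fun t : ℝ => φ i x (Function.update y i t))
    (Nash : (Fin m → ℝ) → Set (Fin I → ℝ))
    (hNash : ∀ x, Nash x = {y : Fin I → ℝ | ∀ i, y i ∈ S i x ∧
      ∀ t ∈ S i x, φ i x y ≤ φ i x (Function.update y i t)})
    (V : (Fin m → ℝ) → ℝ)
    (hV : ∀ x, V x = sSup ((f x) '' Nash x))
    : ∃ xstar ∈ X, ∀ x ∈ X, V x ≤ V xstar := by
  classical
  have hKc : IsCompact (Set.univ.pi Y : Set (Fin I → ℝ)) := isCompact_univ_pi hYc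
  set G : Set ((Fin m → ℝ) × (Fin I → ℝ)) :=
    {p | p.1 ∈ X ∧ p.2 ∈ Nash p.1} with hGdef
  -- sequential closedness of G
  have hGseq : IsSeqClosed G := by
    intro p q hpG hpq
    have hx : Filter.Tendsto (fun n => (p n).1) Filter.atTop (nhds q.1) :=
      (continuous_fst.tendsto q).comp hpq
    have hy : Filter.Tendsto (fun n => (p n).2) Filter.atTop (nhds q.2) :=
      (continuous_snd.tendsto q).comp hpq
    have hyi : ∀ i, Filter.Tendsto (fun n => (p n).2 i) Filter.atTop (nhds (q.2 i)) :=
      fun i => ((continuous_apply i).tendsto q.2).comp hy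
    have hNn : ∀ n i, (p n).2 i ∈ S i (p n).1 ∧ ∀ t ∈ S i (p n).1,
        φ i (p n).1 (p n).2 ≤ φ i (p n).1 (Function.update (p n).2 i t) := by
      intro n i
      have h := (hpG n).2
      rw [hNash] at h
      exact h i
    refine ⟨hXc.isClosed.mem_of_tendsto hx
      (Filter.Eventually.of_forall fun n => (hpG n).1), ?_⟩
    rw [hNash]
    intro i
    have hμt : Filter.Tendsto (fun n => μ i ((p n).1)) Filter.atTop (nhds (μ i q.1)) :=
      ((hμ i).tendsto q.1).comp hx
    constructor
    · rw [hS]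
      refine ⟨(hYc i).isClosed.mem_of_tendsto (hyi i)
          (Filter.Eventually.of_forall fun n => ?_), ?_⟩
      · have h := (hNn n i).1; rw [hS] at h; exact h.1
      · have hlim : Filter.Tendsto
            (fun n => μ i ((p n).1) * (p n).2 i + l i * Real.sqrt (Sig i) * |(p n).2 i|)
            Filter.atTop (nhds (μ i q.1 * q.2 i + l i * Real.sqrt (Sig i) * |q.2 i|)) :=
          (hμt.mul (hyi i)).add (Filter.Tendsto.const_mul _ (hyi i).abs)
        refine le_of_tendsto hlim (Filter.Eventually.of_forall fun n => ?_)
        have h := (hNn n i).1; rw [hS] at h; exact h.2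
    · intro t ht
      rw [hS] at ht
      obtain ⟨htY, htle⟩ := ht
      set c : ℝ := l i * Real.sqrt (Sig i) with hcdef
      set g : (Fin m → ℝ) → ℝ := fun x => μ i x * t + c * |t| with hgdef
      have hgt : Filter.Tendsto (fun n => g ((p n).1)) Filter.atTop (nhds (g q.1)) :=
        (hμt.mul tendsto_const_nhds).add tendsto_const_nhds
      set lam : ℕ → ℝ := fun n => b i / max (g ((p n).1)) (b i) with hlamdef
      have hmaxpos : ∀ n, 0 < max (g ((p n).1)) (b i) := fun n =>
        lt_of_lt_of_le (hb i) (le_max_right _ _)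
      have hlam0 : ∀ n, 0 ≤ lam n := fun n => le_of_lt (div_pos (hb i) (hmaxpos n))
      have hlam1 : ∀ n, lam n ≤ 1 := fun n =>
        (div_le_one (hmaxpos n)).2 (le_max_right _ _)
      have hlamt : Filter.Tendsto lam Filter.atTop (nhds 1) := by
        have hmt : Filter.Tendsto (fun n => max (g ((p n).1)) (b i)) Filter.atTop
            (nhds (max (g q.1) (b i))) := hgt.max tendsto_const_nhds
        rw [max_eq_right htle] at hmt
        have hd := Filter.Tendsto.div
          (tendsto_const_nhds (x := b i) (f := Filter.atTop (α := ℕ))) hmt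
          (ne_of_gt (hb i))
        rw [div_self (ne_of_gt (hb i))] at hd
        exact hd
      have htn : ∀ n, lam n * t ∈ S i ((p n).1) := by
        intro n
        rw [hS]
        constructor
        · have h := (hYconv i) htY (hY0 i) (hlam0 n)
            (sub_nonneg.2 (hlam1 n)) (by ring)
          simpa using h
        · have habs : |lam n * t| = lam n * |t| := by
            rw [abs_mul, abs_of_nonneg (hlam0 n)]
          have heq : μ i ((p n).1) * (lam n * t) + c * |lam n * t|
              = lam n * g ((p n).1) := by
            rw [habs, hgdef]; ring
          rw [heq]
          calc lam n * g ((p n).1) ≤ lam n * max (g ((p n).1)) (b i) :=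
                mul_le_mul_of_nonneg_left (le_max_left _ _) (hlam0 n)
            _ = b i := div_mul_cancel₀ _ (ne_of_gt (hmaxpos n))
      have hL : Filter.Tendsto (fun n => φ i ((p n).1) ((p n).2)) Filter.atTop
          (nhds (φ i q.1 q.2)) := ((hφc i).tendsto q).comp hpq
      have hupd : Filter.Tendsto (fun n => Function.update ((p n).2) i (lam n * t))
          Filter.atTop (nhds (Function.update q.2 i t)) := by
        rw [tendsto_pi_nhds]
        intro j
        by_cases hji : j = i
        · subst hji
          simp only [Function.update_self]
          simpa using hlamt.mul (tendsto_const_nhds (x := t))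
        · simp only [Function.update_of_ne hji]
          exact hyi j
      have hR : Filter.Tendsto
          (fun n => φ i ((p n).1) (Function.update ((p n).2) i (lam n * t)))
          Filter.atTop (nhds (φ i q.1 (Function.update q.2 i t))) :=
        ((hφc i).tendsto (q.1, Function.update q.2 i t)).comp (hx.prodMk_nhds hupd)
      exact le_of_tendsto_of_tendsto' hL hR (fun n => (hNn n i).2 _ (htn n))
  have hGclosed : IsClosed G := hGseq.isClosed
  have hGsub : G ⊆ X ×ˢ (Set.univ.pi Y) := by
    rintro ⟨x, y⟩ ⟨hxX, hyN⟩
    refine ⟨hxX, fun i _ => ?_⟩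
    rw [hNash] at hyN
    have h := (hyN i).1
    rw [hS] at h
    exact h.1
  have hGc : IsCompact G := (hXc.prod hKc).of_isClosed_subset hGclosed hGsub
  by_cases hGne : G.Nonempty
  · obtain ⟨pM, hpM, hmax⟩ := hGc.exists_isMaxOn hGne hf.continuousOn
    set M := f pM.1 pM.2 with hM
    have hbdd : ∀ x ∈ X, ∀ z ∈ (f x) '' Nash x, z ≤ M := by
      rintro x hx z ⟨y, hy, rfl⟩
      exact hmax (⟨hx, hy⟩ : (x, y) ∈ G)
    have hVle : ∀ x ∈ X, (Nash x).Nonempty → V x ≤ M := by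
      intro x hx hN
      obtain ⟨y, hy⟩ := hN
      rw [hV]
      exact csSup_le ⟨f x y, Set.mem_image_of_mem _ hy⟩ (fun z hz => hbdd x hx z hz)
    have hVM : V pM.1 = M := by
      rw [hV]
      apply le_antisymm
      · exact csSup_le ⟨f pM.1 pM.2, Set.mem_image_of_mem _ hpM.2⟩
          (fun z hz => hbdd pM.1 hpM.1 z hz)
      · exact le_csSup ⟨M, fun z hz => hbdd pM.1 hpM.1 z hz⟩
          (Set.mem_image_of_mem _ hpM.2)
    by_cases h0 : 0 ≤ M
    · refine ⟨pM.1, hpM.1, fun x hx => ?_⟩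
      rw [hVM]
      by_cases hN : (Nash x).Nonempty
      · exact hVle x hx hN
      · rw [hV, Set.not_nonempty_iff_eq_empty.1 hN]
        simpa [Real.sSup_empty] using h0
    · by_cases hA : ∃ x0 ∈ X, ¬ (Nash x0).Nonempty
      · obtain ⟨x0, hx0, hN0⟩ := hA
        have hV0 : V x0 = 0 := by
          rw [hV, Set.not_nonempty_iff_eq_empty.1 hN0]
          simp [Real.sSup_empty]
        refine ⟨x0, hx0, fun x hx => ?_⟩
        rw [hV0]
        by_cases hN : (Nash x).Nonempty
        · exact le_trans (hVle x hx hN) (le_of_not_ge h0)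
        · rw [hV, Set.not_nonempty_iff_eq_empty.1 hN]
          simp [Real.sSup_empty]
      · push_neg at hA
        refine ⟨pM.1, hpM.1, fun x hx => ?_⟩
        rw [hVM]
        exact hVle x hx (hA x hx)
  · obtain ⟨x0, hx0⟩ := hXne
    have hNe : ∀ x ∈ X, Nash x = ∅ := by
      intro x hx
      by_contra h
      obtain ⟨y, hy⟩ := Set.nonempty_iff_ne_empty.2 h
      exact hGne ⟨(x, y), hx, hy⟩
    refine ⟨x0, hx0, fun x hx => ?_⟩
    rw [hV, hV, hNe x hx, hNe x0 hx0]
    simp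
end
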